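/- Let λ ⊆ μ be partitions with at most N parts such that μ−λ is a vertical k-strip. Then, as identities of rational functions in ℚ(q,t), Ψ_{(μ+1)/(λ+1)} = Ψ_{μ/λ}, where ν+1 denotes the partition (ν_1+1,…,ν_N+1) with N parts (so that (μ+1)−(λ+1) is again a vertical k-strip). -/

import Mathlib

open Finset
open scoped Classical

noncomputable section

/-- The field `ℚ(q,t)` of rational functions in two indeterminates. -/
abbrev QTField := FractionRing (MvPolynomial (Fin 2) ℚ)

/-- The indeterminate `q`. -/
def qQT : QTField := algebraMap (MvPolynomial (Fin 2) ℚ) _ (MvPolynomial.X 0)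

/-- The indeterminate `t`. -/
def tQT : QTField := algebraMap (MvPolynomial (Fin 2) ℚ) _ (MvPolynomial.X 1)

/-- The arm length `a_ν(s)` of the square `s = (i,j)` (`0`-indexed) in the partition `ν`. -/
def armLen (nu : ℕ → ℕ) (i j : ℕ) : ℕ := nu i - (j + 1)

/-- The leg length `l_ν(s)` of the square `s = (i,j)` (`0`-indexed) in the partition `ν`
with at most `N` parts. -/
def legLen (N : ℕ) (nu : ℕ → ℕ) (i j : ℕ) : ℕ :=
  ((range N).filter fun i' => i < i' ∧ j + 1 ≤ nu i').card

/-- `b_ν(s;q,t) = (1 − q^{a(s)} t^{l(s)+1})/(1 − q^{a(s)+1} t^{l(s)})` if `s` lies in the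
diagram of `ν`, and `1` otherwise. -/
def bQT (N : ℕ) (nu : ℕ → ℕ) (i j : ℕ) : QTField :=
  if j < nu i then
    (1 - qQT ^ armLen nu i j * tQT ^ (legLen N nu i j + 1)) /
      (1 - qQT ^ (armLen nu i j + 1) * tQT ^ legLen N nu i j)
  else 1

/-- The Pieri coefficient `Ψ_{μ/λ} = ∏_{s ∈ C_{μ/λ}, s ∉ R_{μ/λ}} b_μ(s)/b_λ(s)`, the
product over squares `s = (i,j)` of the diagram of `μ` lying in a column meeting `μ − λ`
but not in a row meeting `μ − λ`. -/
def PsiQT (N : ℕ) (lam mu : ℕ → ℕ) : QTField :=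
  ∏ i ∈ range N, ∏ j ∈ range (mu i),
    if (∃ i' < N, lam i' ≤ j ∧ j < mu i') ∧ ¬ lam i < mu i then
      bQT N mu i j / bQT N lam i j
    else 1

/-- `ν + 1 = (ν_1+1, …, ν_N+1)`, a partition with (exactly) `N` parts. -/
def addOne (N : ℕ) (nu : ℕ → ℕ) : ℕ → ℕ := fun i => if i < N then nu i + 1 else 0

/-- For partitions `λ ⊆ μ` with at most `N` parts such that `μ − λ` is a vertical
`k`-strip, `Ψ_{(μ+1)/(λ+1)} = Ψ_{μ/λ}` in `ℚ(q,t)`. -/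
theorem Psi_addOne_invariance (N k : ℕ) (lam mu : ℕ → ℕ)
    (hlam : Antitone lam) (hmu : Antitone mu)
    (hlamN : ∀ i, N ≤ i → lam i = 0) (hmuN : ∀ i, N ≤ i → mu i = 0)
    (hsub : ∀ i, lam i ≤ mu i) (hstrip : ∀ i, mu i - lam i ≤ 1)
    (hcard : ∑ i ∈ range N, (mu i - lam i) = k) :
    PsiQT N (addOne N lam) (addOne N mu) = PsiQT N lam mu := by
  have hleg : ∀ (nu : ℕ → ℕ) (i j : ℕ),
      legLen N (addOne N nu) i (j + 1) = legLen N nu i j := by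
    intro nu i j
    unfold legLen
    congr 1
    apply Finset.filter_congr
    intro i' hi'
    simp only [Finset.mem_range] at hi'
    simp [addOne, hi']
  have hb : ∀ (nu : ℕ → ℕ) (i j : ℕ), i < N →
      bQT N (addOne N nu) i (j + 1) = bQT N nu i j := by
    intro nu i j hi
    unfold bQT armLen
    rw [hleg]
    have h1 : addOne N nu i = nu i + 1 := by simp [addOne, hi]
    rw [h1]
    by_cases hjn : j < nu i
    · rw [if_pos (by omega : j + 1 < nu i + 1), if_pos hjn]
      have h3 : nu i + 1 - (j + 1 + 1) = nu i - (j + 1) := by omega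
      rw [h3]
    · rw [if_neg (by omega : ¬ j + 1 < nu i + 1), if_neg hjn]
  unfold PsiQT
  apply Finset.prod_congr rfl
  intro i hi
  simp only [Finset.mem_range] at hi
  have hm : addOne N mu i = mu i + 1 := by simp [addOne, hi]
  rw [show range (addOne N mu i) = range (mu i + 1) from by rw [hm],
    Finset.prod_range_succ']
  have h0 : (if (∃ i' < N, addOne N lam i' ≤ 0 ∧ 0 < addOne N mu i') ∧
      ¬ addOne N lam i < addOne N mu i then
      bQT N (addOne N mu) i 0 / bQT N (addOne N lam) i 0 else 1) = 1 := by
    rw [if_neg]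
    rintro ⟨⟨i', hi', hle, _⟩, _⟩
    simp [addOne, hi'] at hle
  rw [h0, mul_one]
  apply Finset.prod_congr rfl
  intro j hj
  have hcond : ((∃ i' < N, addOne N lam i' ≤ j + 1 ∧ j + 1 < addOne N mu i') ∧
      ¬ addOne N lam i < addOne N mu i) ↔
      ((∃ i' < N, lam i' ≤ j ∧ j < mu i') ∧ ¬ lam i < mu i) := by
    constructor
    · rintro ⟨⟨i', hi', h1, h2⟩, h3⟩
      simp [addOne, hi'] at h1 h2
      simp [addOne, hi] at h3
      exact ⟨⟨i', hi', h1, h2⟩, by omega⟩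
    · rintro ⟨⟨i', hi', h1, h2⟩, h3⟩
      refine ⟨⟨i', hi', ?_, ?_⟩, ?_⟩ <;> simp [addOne, hi', hi] <;> omega
  by_cases hc : (∃ i' < N, lam i' ≤ j ∧ j < mu i') ∧ ¬ lam i < mu i
  · rw [if_pos (hcond.mpr hc), if_pos hc, hb mu i j hi, hb lam i j hi]
  · rw [if_neg (fun h => hc (hcond.mp h)), if_neg hc]

end
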